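/- Suppose L is transitive, with an A-linear splitting t : Der_R(A) → L of the anchor (ρ ∘ t = id). Let D : L → End_R(L) be a representation of L on itself extending the canonical representation on the kernel of ρ, that is: D is additive and A-linear in its subscript (D_{a • X} = a • D_X as operators), each D_X satisfies the Leibniz rule D_X(a • Y) = a • D_X Y + ρ(X)(a) • Y, D is flat (D_{⁅X,Y⁆} = D_X ∘ D_Y − D_Y ∘ D_X), and D_X Y = ⁅X, Y⁆ whenever ρ(Y) = 0. Then: (a) the formula ∇_V X := D_X(t(V)) + ⁅t(V), X⁆ does not depend on the choice of A-linear splitting t; (b) ∇ is a Cartan connection on L; (c) the induced representation ∇̄_X Y := ∇_{ρ(Y)} X + ⁅X, Y⁆ equals D; and (d) consequently ∇ ↦ ∇̄ is a bijection from the set of Cartan connections on L onto the set of such representations D. (Proposition 6.1.) -/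
import Mathlib


variable {R A L : Type*} [CommRing R] [CommRing A] [Algebra R A]
  [LieRing L] [LieAlgebra R L] [Module A L]
  [IsScalarTower R A L] [SMulCommClass R A L] [SMulCommClass A R L]

/-- The induced `𝔤`-connection on derivations: `∇̄_X V := ρ(∇_V X) + ⁅ρ(X), V⁆`. -/
def barDer (ρ : L →ₗ[A] Derivation R A A) (D : Derivation R A A → L → L)
    (X : L) (V : Derivation R A A) : Derivation R A A :=
  ρ (D V X) + ⁅ρ X, V⁆

/-- The induced `𝔤`-connection of `L` on itself: `∇̄_X Y := ∇_{ρ(Y)} X + ⁅X, Y⁆`. -/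
def barSelf (ρ : L →ₗ[A] Derivation R A A) (D : Derivation R A A → L → L)
    (X Y : L) : L :=
  D (ρ Y) X + ⁅X, Y⁆

/-- `D` is a connection on `L`: additive in both arguments, `A`-linear in the
derivation argument, and satisfying the Leibniz rule. -/
def IsConnection (D : Derivation R A A → L → L) : Prop :=
  (∀ (V W : Derivation R A A) (X : L), D (V + W) X = D V X + D W X) ∧
  (∀ (V : Derivation R A A) (X Y : L), D V (X + Y) = D V X + D V Y) ∧
  (∀ (a : A) (V : Derivation R A A) (X : L), D (a • V) X = a • D V X) ∧
  (∀ (V : Derivation R A A) (a : A) (X : L), D V (a • X) = a • D V X + V a • X)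

/-- `D` is a Cartan connection: it is compatible with the bracket of `L`. -/
def IsCartanConnection (ρ : L →ₗ[A] Derivation R A A)
    (D : Derivation R A A → L → L) : Prop :=
  ∀ (V : Derivation R A A) (X Y : L),
    D V ⁅X, Y⁆ = ⁅D V X, Y⁆ + ⁅X, D V Y⁆
      + D (barDer ρ D Y V) X - D (barDer ρ D X V) Y

/-- `D : L → End_R(L)` is a representation of `L` on itself extending the canonical
representation of `L` on the kernel of the anchor `ρ`. -/
def IsSelfRep (ρ : L →ₗ[A] Derivation R A A) (D : L → L → L) : Prop :=
  (∀ X Y Z : L, D (X + Y) Z = D X Z + D Y Z) ∧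
  (∀ (a : A) (X Y : L), D (a • X) Y = a • D X Y) ∧
  (∀ X Y Z : L, D X (Y + Z) = D X Y + D X Z) ∧
  (∀ (r : R) (X Y : L), D X (r • Y) = r • D X Y) ∧
  (∀ (X : L) (a : A) (Y : L), D X (a • Y) = a • D X Y + ρ X a • Y) ∧
  (∀ X Y Z : L, D ⁅X, Y⁆ Z = D X (D Y Z) - D Y (D X Z)) ∧
  (∀ X Y : L, ρ Y = 0 → D X Y = ⁅X, Y⁆)

/-- (Proposition 6.1.)  For a transitive `L` with `A`-linear
splitting `t` of the anchor and a representation `D` of `L` on itself extending the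
canonical representation on `ker ρ`: (a) the formula `∇_V X := D_X(t(V)) + ⁅t(V), X⁆`
does not depend on the splitting `t`; (b) `∇` is a Cartan connection on `L`;
(c) the induced representation `∇̄` equals `D`; (d) consequently `∇ ↦ ∇̄` is a
bijection from Cartan connections on `L` onto such representations. -/
theorem transitive_cartan_connections_biject_with_self_representations
    (ρ : L →ₗ[A] Derivation R A A)
    (hanchor : ∀ X Y : L, ρ ⁅X, Y⁆ = ⁅ρ X, ρ Y⁆)
    (hleib : ∀ (X : L) (a : A) (Y : L), ⁅X, a • Y⁆ = a • ⁅X, Y⁆ + ρ X a • Y)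
    (t : Derivation R A A →ₗ[A] L) (ht : ∀ V : Derivation R A A, ρ (t V) = V)
    (D : L → L → L) (hrep : IsSelfRep ρ D) :
    -- (a) independence of the choice of splitting
    (∀ t' : Derivation R A A →ₗ[A] L, (∀ V : Derivation R A A, ρ (t' V) = V) →
      ∀ (V : Derivation R A A) (X : L),
        D X (t V) + ⁅t V, X⁆ = D X (t' V) + ⁅t' V, X⁆) ∧
    -- (b) ∇ is a Cartan connection
    (IsConnection (fun (V : Derivation R A A) (X : L) => D X (t V) + ⁅t V, X⁆) ∧
      IsCartanConnection ρ (fun (V : Derivation R A A) (X : L) => D X (t V) + ⁅t V, X⁆)) ∧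
    -- (c) the induced representation ∇̄ equals D
    (∀ X Y : L,
      barSelf ρ (fun (V : Derivation R A A) (X : L) => D X (t V) + ⁅t V, X⁆) X Y
        = D X Y) ∧
    -- (d) ∇ ↦ ∇̄ is a bijection: it is injective on Cartan connections, and the
    -- image of any Cartan connection is such a representation
    ((∀ D₁ D₂ : Derivation R A A → L → L,
        IsConnection D₁ → IsCartanConnection ρ D₁ →
        IsConnection D₂ → IsCartanConnection ρ D₂ →
        (∀ X Y : L, barSelf ρ D₁ X Y = barSelf ρ D₂ X Y) → D₁ = D₂) ∧
      (∀ D₀ : Derivation R A A → L → L,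
        IsConnection D₀ → IsCartanConnection ρ D₀ →
          IsSelfRep ρ (fun X Y : L => barSelf ρ D₀ X Y))) := by
  obtain ⟨hadd1, hsmulA, hadd2, hsmulR, hleibD, hflat, hker⟩ := hrep
  -- negation and subtraction in the second argument of `D`
  have hDneg : ∀ X Y : L, D X (-Y) = -D X Y := by
    intro X Y
    have h := hsmulR (-1 : R) X Y
    rwa [neg_smul, one_smul, neg_smul, one_smul] at h
  have hDsub : ∀ X Y Z : L, D X (Y - Z) = D X Y - D X Z := by
    intro X Y Z
    rw [sub_eq_add_neg, hadd2, hDneg, sub_eq_add_neg]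
  -- the key formula: `D X Z = D X (t (ρ Z)) + ⁅t (ρ Z), X⁆ + ⁅X, Z⁆`
  have key : ∀ X Z : L, D X Z = D X (t (ρ Z)) + ⁅t (ρ Z), X⁆ + ⁅X, Z⁆ := by
    intro X Z
    have hk : ρ (Z - t (ρ Z)) = 0 := by rw [map_sub, ht, sub_self]
    have h := hker X _ hk
    rw [hDsub, lie_sub] at h
    rw [sub_eq_iff_eq_add] at h
    rw [h, ← lie_skew (t (ρ Z)) X]
    abel
  -- the bar connection of ∇ on derivations
  have hbar : ∀ (X : L) (V : Derivation R A A),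
      barDer ρ (fun (V : Derivation R A A) (X : L) => D X (t V) + ⁅t V, X⁆) X V
        = ρ (D X (t V)) := by
    intro X V
    show ρ (D X (t V) + ⁅t V, X⁆) + ⁅ρ X, V⁆ = ρ (D X (t V))
    rw [map_add, hanchor, ht, ← lie_skew V (ρ X)]
    abel
  -- (a)
  have parta : ∀ t' : Derivation R A A →ₗ[A] L, (∀ V : Derivation R A A, ρ (t' V) = V) →
      ∀ (V : Derivation R A A) (X : L),
        D X (t V) + ⁅t V, X⁆ = D X (t' V) + ⁅t' V, X⁆ := by
    intro t' ht' V X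
    rw [key X (t' V), ht', ← lie_skew (t' V) X]
    abel
  -- (b) : connection
  have hconn : IsConnection (fun (V : Derivation R A A) (X : L) => D X (t V) + ⁅t V, X⁆) := by
    refine ⟨?_, ?_, ?_, ?_⟩
    · intro V W X
      dsimp only
      rw [map_add, hadd2, add_lie]
      abel
    · intro V X Y
      dsimp only
      rw [hadd1, lie_add]
      abel
    · intro a V X
      dsimp only
      rw [map_smul, hleibD, ← lie_skew (a • t V) X, hleib X a (t V), ← lie_skew (t V) X,
        smul_add, smul_neg, neg_add]
      abel
    · intro V a X
      dsimp only
      rw [hsmulA, hleib, ht, smul_add]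
      abel
  -- (b) : Cartan
  have hcartan : IsCartanConnection ρ
      (fun (V : Derivation R A A) (X : L) => D X (t V) + ⁅t V, X⁆) := by
    intro V X Y
    dsimp only
    rw [hbar Y V, hbar X V, hflat X Y (t V), key X (D Y (t V)), key Y (D X (t V)),
      leibniz_lie (t V) X Y]
    simp only [add_lie, lie_add]
    rw [← lie_skew (D X (t V)) Y]
    abel
  refine ⟨parta, ⟨hconn, hcartan⟩, ?_, ?_, ?_⟩
  -- (c)
  · intro X Y
    show D X (t (ρ Y)) + ⁅t (ρ Y), X⁆ + ⁅X, Y⁆ = D X Y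
    rw [key X Y]
  -- (d) injectivity
  · intro D₁ D₂ _ _ _ _ h
    funext V X
    have h' := h X (t V)
    simp only [barSelf, ht] at h'
    exact add_right_cancel h'
  -- (d) surjectivity
  · intro D₀ hc hcart
    obtain ⟨hc1, hc2, hc3, hc4⟩ := hc
    have hD0 : ∀ X : L, D₀ 0 X = 0 := by
      intro X
      have h := hc3 (0 : A) 0 X
      rwa [zero_smul, zero_smul] at h
    have hρE : ∀ Y Z : L, ρ (D₀ (ρ Z) Y + ⁅Y, Z⁆) = barDer ρ D₀ Y (ρ Z) := by
      intro Y Z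
      rw [map_add, hanchor]
      rfl
    refine ⟨?_, ?_, ?_, ?_, ?_, ?_, ?_⟩
    · intro X Y Z
      simp only [barSelf]
      rw [hc2, add_lie]
      abel
    · intro a X Y
      simp only [barSelf]
      rw [hc4, ← lie_skew (a • X) Y, hleib Y a X, ← lie_skew X Y, smul_add, smul_neg, neg_add]
      abel
    · intro X Y Z
      simp only [barSelf]
      rw [map_add, hc1, lie_add]
      abel
    · intro r X Y
      simp only [barSelf]
      have h2 : D₀ (ρ (r • Y)) X = r • D₀ (ρ Y) X := by
        rw [algebra_compatible_smul A r Y, map_smul, hc3, algebraMap_smul]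
      rw [h2, lie_smul, smul_add]
    · intro X a Y
      simp only [barSelf]
      rw [map_smul, hc3, hleib, smul_add]
      abel
    · intro X Y Z
      simp only [barSelf]
      rw [hρE X Z, hρE Y Z, hcart (ρ Z) X Y]
      simp only [lie_add]
      rw [lie_lie, ← lie_skew (D₀ (ρ Z) X) Y]
      abel
    · intro X Y h0
      simp only [barSelf]
      rw [h0, hD0, zero_add]
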